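/- arXiv:2109.08946 — 3 statements merged into one kernel-verified Lean document; each statement's English description precedes it below -/
import Mathlib

section
/- Let 𝔤 be a compact Lie algebra, 𝔨 a subalgebra normalized by a Cartan subalgebra of 𝔤 (a regular subalgebra). Fix an ad-invariant inner product Q on 𝔤, let n = n_𝔤(𝔨) be the normalizer of 𝔨 and 𝔭 the Q-orthogonal complement of n in 𝔤. Then no non-zero ad_n-submodule of 𝔨 is ad_n-equivariantly isomorphic to any non-zero ad_n-submodule of 𝔭. -/
/-!
Complexify. Since `ad 𝔱` is a commuting family, the complexification of `U₂` contains a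
simultaneous eigenvector `v` of `𝔱`, with weight `α`; the equivariant isomorphism gives `u ≠ 0` of
the same weight in the complexification of `U₁ ⊆ 𝔨`. If `α = 0`, then `v` centralizes the maximal
abelian `𝔱`, so it lies in `𝔱 ⊗ ℂ ⊆ n ⊗ ℂ`, which is orthogonal to `v ∈ 𝔭 ⊗ ℂ`, and positivity of
`Q` forces `v = 0`.
If `α ≠ 0`, invariance and positivity of `Q` make `α` imaginary and `⁅u, conj u⁆ = i H` with
`α H ≠ 0`, so `u`, `conj u` span an `sl₂`. As `conj u ∈ 𝔨 ⊗ ℂ ⊆ n ⊗ ℂ` is orthogonal to `v`, the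
weight-zero vector `⁅conj u, v⁆` is orthogonal to `𝔱` and vanishes; then `v` is a lowest weight
vector of positive weight for this `sl₂`, impossible in finite dimension.
-/

lemma eq_zero_of_lie_eq_zero_of_lie_eq_smul {K L M : Type*} [Field K] [CharZero K] [LieRing L]
    [LieAlgebra K L] [AddCommGroup M] [Module K M] [LieRingModule L M] [LieModule K L M]
    [FiniteDimensional K M] {e f h : L} {m : M} {c : K} (hc : c ≠ 0) (hef : ⁅e, f⁆ = h)
    (he0 : e ≠ 0) (he : ⁅h, e⁆ = c • e) (hf : ⁅h, f⁆ = -(c • f)) (hm : ⁅h, m⁆ = c • m)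
    (hfm : ⁅f, m⁆ = 0) : m = 0 := by
  by_contra hm0
  -- after rescaling, `m` is a primitive vector of eigenvalue `-2`
  have t : IsSl2Triple (-((2 / c) • h)) ((2 / c) • f) e :=
    { h_ne_zero := by
        rintro h0
        rw [neg_eq_zero, smul_eq_zero, or_iff_right (div_ne_zero two_ne_zero hc)] at h0
        rw [h0, zero_lie, eq_comm, smul_eq_zero, or_iff_right hc] at he
        exact he0 he
      lie_e_f := by rw [smul_lie, ← lie_skew, hef, smul_neg]
      lie_h_e_nsmul := by
        rw [neg_lie, smul_lie, lie_smul, hf, smul_neg, smul_neg, neg_neg, smul_smul, smul_smul,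
          two_nsmul, ← add_smul]
        congr 1
        field_simp
        ring
      lie_h_f_nsmul := by
        rw [neg_lie, smul_lie, he, smul_smul, two_nsmul, div_mul_cancel₀ _ hc, two_smul] }
  have P : t.HasPrimitiveVectorWith m (-2 : K) :=
    { ne_zero := hm0
      lie_h := by rw [neg_lie, smul_lie, hm, smul_smul, div_mul_cancel₀ _ hc, neg_smul]
      lie_e := by rw [smul_lie, hfm, smul_zero] }
  obtain ⟨n, hn⟩ := P.exists_nat
  have : ((n + 2 : ℕ) : K) = 0 := by push_cast; linear_combination -hn
  exact absurd (Nat.cast_eq_zero.mp this) (by omega)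

lemma Module.End.exists_common_eigenvector_of_commute {K V ι : Type*} [Field K] [IsAlgClosed K]
    [AddCommGroup V] [Module K V] [FiniteDimensional K V] (F : ι → Module.End K V)
    (hF : ∀ i j, Commute (F i) (F j)) (W : Submodule K V) (hW : W ≠ ⊥)
    (hFW : ∀ i, ∀ w ∈ W, F i w ∈ W) :
    ∃ v ∈ W, v ≠ 0 ∧ ∀ i, ∃ c : K, F i v = c • v := by
  induction W using WellFoundedLT.induction with
  | ind W ih =>
  by_cases hscalar : ∀ i, ∃ c : K, ∀ w ∈ W, F i w = c • w
  · obtain ⟨v, hvW, hv0⟩ := Submodule.exists_mem_ne_zero_of_ne_bot hW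
    exact ⟨v, hvW, hv0, fun i => (hscalar i).imp fun c hc => hc v hvW⟩
  push Not at hscalar
  obtain ⟨i, hi⟩ := hscalar
  have : Nontrivial W := Submodule.nontrivial_iff_ne_bot.mpr hW
  obtain ⟨c, hc⟩ := Module.End.exists_eigenvalue ((F i).restrict (hFW i))
  obtain ⟨⟨w, hwW⟩, hw⟩ := hc.exists_hasEigenvector
  let W' := W ⊓ (F i).eigenspace c
  have hW'lt : W' < W := by
    obtain ⟨w₀, hw₀W, hw₀⟩ := hi c
    exact lt_of_le_of_ne inf_le_left fun h =>
      hw₀ (Module.End.mem_eigenspace_iff.mp (h ▸ hw₀W : w₀ ∈ W').2)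
  have hwW' : w ∈ W' := by
    refine ⟨hwW, Module.End.mem_eigenspace_iff.mpr ?_⟩
    simpa using congrArg Subtype.val hw.apply_eq_smul
  obtain ⟨v, hv, hv0, hvF⟩ := ih W' hW'lt
    (Submodule.ne_bot_iff _ |>.mpr ⟨w, hwW', by simpa using hw.2⟩)
    (fun j x ⟨hxW, hx⟩ => ⟨hFW j x hxW, Module.End.mem_eigenspace_iff.mpr (by
      rw [← Module.End.mul_apply, (hF i j).eq, Module.End.mul_apply,
        Module.End.mem_eigenspace_iff.mp hx, map_smul])⟩)
  exact ⟨v, hv.1, hv0, hvF⟩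

lemma LieSubalgebra.mem_of_forall_lie_eq_zero {R L : Type*} [CommRing R] [LieRing L]
    [LieAlgebra R L] {𝔱 : LieSubalgebra R L} (htab : ∀ X ∈ 𝔱, ∀ Y ∈ 𝔱, ⁅X, Y⁆ = 0)
    (htmax : ∀ 𝔱' : LieSubalgebra R L, (∀ X ∈ 𝔱', ∀ Y ∈ 𝔱', ⁅X, Y⁆ = 0) → 𝔱 ≤ 𝔱' → 𝔱' = 𝔱)
    {X : L} (hX : ∀ H ∈ 𝔱, ⁅H, X⁆ = 0) : X ∈ 𝔱 := by
  let S : Submodule R L := 𝔱.toSubmodule ⊔ R ∙ X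
  have hS : ∀ a ∈ S, ∀ b ∈ S, ⁅a, b⁆ = 0 := by
    intro a ha b hb
    obtain ⟨t, ht, _, hs, rfl⟩ := Submodule.mem_sup.mp ha
    obtain ⟨t', ht', _, hs', rfl⟩ := Submodule.mem_sup.mp hb
    obtain ⟨r, rfl⟩ := Submodule.mem_span_singleton.mp hs
    obtain ⟨r', rfl⟩ := Submodule.mem_span_singleton.mp hs'
    simp [htab t ht t' ht', hX t ht, ← lie_skew X t', hX t' ht']
  let 𝔱' : LieSubalgebra R L :=
    { S with lie_mem' := fun ha hb => (hS _ ha _ hb).symm ▸ S.zero_mem }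
  rw [← htmax 𝔱' hS (le_sup_left : 𝔱.toSubmodule ≤ S)]
  exact Submodule.mem_sup_right (Submodule.mem_span_singleton_self X)

/-- The complexification `ℂ ⊗[ℝ] L` of a real vector space, realised as pairs:
`mk x y` stands for `x + i y`. -/
def Complexification (L : Type*) := L × L

namespace Complexification

variable {L : Type*}

def mk (x y : L) : Complexification L := (x, y)

def re (p : Complexification L) : L := Prod.fst (β := L) p

def im (p : Complexification L) : L := Prod.snd (α := L) p

@[simp] lemma re_mk (x y : L) : (mk x y).re = x := rfl

@[simp] lemma im_mk (x y : L) : (mk x y).im = y := rfl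

@[ext] lemma ext {p q : Complexification L} (h₁ : p.re = q.re) (h₂ : p.im = q.im) : p = q :=
  Prod.ext h₁ h₂

section Module

variable [AddCommGroup L]

instance : AddCommGroup (Complexification L) := inferInstanceAs (AddCommGroup (L × L))

@[simp] lemma re_zero : (0 : Complexification L).re = 0 := rfl
@[simp] lemma im_zero : (0 : Complexification L).im = 0 := rfl
@[simp] lemma re_add (p q : Complexification L) : (p + q).re = p.re + q.re := rfl
@[simp] lemma im_add (p q : Complexification L) : (p + q).im = p.im + q.im := rfl

def ofReal (x : L) : Complexification L := mk x 0

@[simp] lemma re_ofReal (x : L) : (ofReal x).re = x := rfl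
@[simp] lemma im_ofReal (x : L) : (ofReal x).im = 0 := rfl

@[simp] lemma ofReal_zero : ofReal (0 : L) = 0 := rfl

def conj (p : Complexification L) : Complexification L := mk p.re (-p.im)

@[simp] lemma re_conj (p : Complexification L) : (conj p).re = p.re := rfl
@[simp] lemma im_conj (p : Complexification L) : (conj p).im = -p.im := rfl

variable [Module ℝ L]

instance : SMul ℂ (Complexification L) where
  smul z p := mk (z.re • p.re - z.im • p.im) (z.im • p.re + z.re • p.im)

@[simp] lemma re_smul (z : ℂ) (p : Complexification L) :
    (z • p).re = z.re • p.re - z.im • p.im := rfl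
@[simp] lemma im_smul (z : ℂ) (p : Complexification L) :
    (z • p).im = z.im • p.re + z.re • p.im := rfl

instance : Module ℂ (Complexification L) where
  one_smul p := by ext <;> simp
  mul_smul z w p := by ext <;> simp <;> module
  smul_zero z := by ext <;> simp
  smul_add z p q := by ext <;> simp <;> module
  add_smul z w p := by ext <;> simp <;> module
  zero_smul p := by ext <;> simp

@[simp] lemma re_real_smul (r : ℝ) (p : Complexification L) : (r • p).re = r • p.re := by
  rw [← Complex.coe_smul]
  exact (re_smul _ _).trans (by simp)

@[simp] lemma im_real_smul (r : ℝ) (p : Complexification L) : (r • p).im = r • p.im := by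
  rw [← Complex.coe_smul]
  exact (im_smul _ _).trans (by simp)

instance [FiniteDimensional ℝ L] : FiniteDimensional ℂ (Complexification L) :=
  let e : (L × L) →ₗ[ℝ] Complexification L :=
    { toFun := fun x => mk x.1 x.2
      map_add' := fun _ _ => rfl
      map_smul' := fun r x => by
        ext <;> simp only [re_real_smul, im_real_smul, re_mk, im_mk, RingHom.id_apply,
          Prod.smul_fst, Prod.smul_snd] }
  have : Module.Finite ℝ (Complexification L) :=
    Module.Finite.of_surjective e fun p => ⟨(p.re, p.im), rfl⟩
  Module.Finite.of_restrictScalars_finite ℝ ℂ _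

lemma conj_smul (z : ℂ) (p : Complexification L) :
    conj (z • p) = starRingEnd ℂ z • conj p := by
  ext
  · simp
  · simp; abel

def submodule (U : Submodule ℝ L) : Submodule ℂ (Complexification L) where
  carrier := {p | p.re ∈ U ∧ p.im ∈ U}
  add_mem' hp hq := ⟨U.add_mem hp.1 hq.1, U.add_mem hp.2 hq.2⟩
  zero_mem' := ⟨U.zero_mem, U.zero_mem⟩
  smul_mem' _ _ hp := ⟨U.sub_mem (U.smul_mem _ hp.1) (U.smul_mem _ hp.2),
    U.add_mem (U.smul_mem _ hp.1) (U.smul_mem _ hp.2)⟩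

variable {U V : Submodule ℝ L} {p : Complexification L}

lemma mem_submodule : p ∈ submodule U ↔ p.re ∈ U ∧ p.im ∈ U := Iff.rfl

lemma submodule_mono (hUV : U ≤ V) : submodule U ≤ submodule V :=
  fun _ hp => ⟨hUV hp.1, hUV hp.2⟩

lemma submodule_ne_bot (hU : U ≠ ⊥) : submodule U ≠ ⊥ := by
  obtain ⟨x, hxU, hx0⟩ := U.exists_mem_ne_zero_of_ne_bot hU
  exact (Submodule.ne_bot_iff _).mpr ⟨ofReal x, ⟨hxU, U.zero_mem⟩, fun h => hx0 (congrArg re h)⟩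

lemma ofReal_mem_submodule {x : L} (hx : x ∈ U) : ofReal x ∈ submodule U := ⟨hx, U.zero_mem⟩

lemma conj_mem_submodule (hp : p ∈ submodule U) : conj p ∈ submodule U := ⟨hp.1, U.neg_mem hp.2⟩

def map (φ : L →ₗ[ℝ] L) : Complexification L →ₗ[ℂ] Complexification L where
  toFun p := mk (φ p.re) (φ p.im)
  map_add' p q := by ext <;> simp
  map_smul' _ _ := by ext <;> simp

@[simp] lemma re_map (φ : L →ₗ[ℝ] L) (p : Complexification L) : (map φ p).re = φ p.re := rfl
@[simp] lemma im_map (φ : L →ₗ[ℝ] L) (p : Complexification L) : (map φ p).im = φ p.im := rfl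

lemma eq_zero_of_map_eq_zero {φ : L →ₗ[ℝ] L} (hφ : ∀ x ∈ U, φ x = 0 → x = 0)
    (hp : p ∈ submodule U) (hφp : map φ p = 0) : p = 0 :=
  ext (hφ _ hp.1 (congrArg re hφp)) (hφ _ hp.2 (congrArg im hφp))

def form (Q : LinearMap.BilinForm ℝ L) (p q : Complexification L) : ℂ :=
  ⟨Q p.re q.re - Q p.im q.im, Q p.re q.im + Q p.im q.re⟩

variable (Q : LinearMap.BilinForm ℝ L)

@[simp] lemma re_form (p q : Complexification L) :
    (form Q p q).re = Q p.re q.re - Q p.im q.im := rfl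
@[simp] lemma im_form (p q : Complexification L) :
    (form Q p q).im = Q p.re q.im + Q p.im q.re := rfl

lemma form_smul_right (p : Complexification L) (z : ℂ) (q : Complexification L) :
    form Q p (z • q) = z * form Q p q := by
  apply Complex.ext <;> simp <;> ring

def normSq (p : Complexification L) : ℝ := Q p.re p.re + Q p.im p.im

variable {Q}

lemma form_conj_self (hQ : ∀ x y, Q x y = Q y x) (p : Complexification L) :
    form Q (conj p) p = normSq Q p := by
  apply Complex.ext <;> simp [normSq, hQ p.im p.re]

lemma normSq_pos (hQ : ∀ x, x ≠ 0 → 0 < Q x x) (hp : p ≠ 0) : 0 < normSq Q p := by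
  have hQnonneg : ∀ x, 0 ≤ Q x x := fun x => by
    rcases eq_or_ne x 0 with rfl | hx
    · simp
    · exact (hQ x hx).le
  by_cases hre : p.re = 0
  · have him : p.im ≠ 0 := fun him => hp (ext hre him)
    exact add_pos_of_nonneg_of_pos (hQnonneg _) (hQ _ him)
  · exact add_pos_of_pos_of_nonneg (hQ _ hre) (hQnonneg _)

lemma form_eq_zero_of_mem_submodule (hUV : ∀ x ∈ U, ∀ y ∈ V, Q x y = 0) {q : Complexification L}
    (hp : p ∈ submodule U) (hq : q ∈ submodule V) : form Q p q = 0 := by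
  apply Complex.ext <;> simp [hUV _ hp.1 _ hq.1, hUV _ hp.1 _ hq.2, hUV _ hp.2 _ hq.1,
    hUV _ hp.2 _ hq.2]

end Module

section Lie

variable [LieRing L]

instance : Bracket (Complexification L) (Complexification L) where
  bracket p q := mk (⁅p.re, q.re⁆ - ⁅p.im, q.im⁆) (⁅p.re, q.im⁆ + ⁅p.im, q.re⁆)

@[simp] lemma re_lie (p q : Complexification L) : ⁅p, q⁆.re = ⁅p.re, q.re⁆ - ⁅p.im, q.im⁆ := rfl
@[simp] lemma im_lie (p q : Complexification L) : ⁅p, q⁆.im = ⁅p.re, q.im⁆ + ⁅p.im, q.re⁆ := rfl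

instance : LieRing (Complexification L) where
  add_lie p q r := by ext <;> simp [add_lie] <;> abel
  lie_add p q r := by ext <;> simp [lie_add] <;> abel
  lie_self p := by
    ext <;> simp only [re_lie, im_lie, lie_self, sub_self, re_zero, im_zero,
      ← lie_skew p.im p.re, add_neg_cancel]
  leibniz_lie p q r := by
    ext <;> simp only [re_lie, im_lie, re_add, im_add, lie_add, add_lie, lie_sub, sub_lie,
      lie_lie] <;> abel

lemma ofReal_lie (x y : L) : ofReal ⁅x, y⁆ = ⁅ofReal x, ofReal y⁆ := by ext <;> simp

@[simp] lemma conj_ofReal (x : L) : conj (ofReal x) = ofReal x := by ext <;> simp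

lemma conj_lie (p q : Complexification L) : conj ⁅p, q⁆ = ⁅conj p, conj q⁆ := by
  ext
  · simp
  · simp; abel

variable [LieAlgebra ℝ L]

instance : LieAlgebra ℂ (Complexification L) where
  lie_smul z p q := by
    ext <;> simp only [re_lie, im_lie, re_smul, im_smul, lie_add, lie_sub, lie_smul] <;> module

variable {U : Submodule ℝ L} {p : Complexification L} {x : L}

lemma lie_ofReal_mem_submodule (hU : ∀ y ∈ U, ⁅x, y⁆ ∈ U) (hp : p ∈ submodule U) :
    ⁅ofReal x, p⁆ ∈ submodule U := by
  simpa [mem_submodule] using And.intro (hU _ hp.1) (hU _ hp.2)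

lemma map_lie_ofReal {φ : L →ₗ[ℝ] L} (hφ : ∀ y ∈ U, φ ⁅x, y⁆ = ⁅x, φ y⁆)
    (hp : p ∈ submodule U) : map φ ⁅ofReal x, p⁆ = ⁅ofReal x, map φ p⁆ := by
  ext <;> simp [hφ _ hp.1, hφ _ hp.2]

lemma form_lie_ofReal {Q : LinearMap.BilinForm ℝ L} (hQ : Q.lieInvariant L)
    (p q : Complexification L) : form Q ⁅p, q⁆ (ofReal x) = form Q q ⁅ofReal x, p⁆ := by
  have hQx : ∀ a b, Q ⁅a, b⁆ x = Q b ⁅x, a⁆ := fun a b => by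
    rw [hQ, ← lie_skew x a, map_neg]
  apply Complex.ext <;> simp [hQx, add_comm]

end Lie

section Weights

variable [LieRing L] [LieAlgebra ℝ L]

def IsWeightVector (𝔱 : LieSubalgebra ℝ L) (α : 𝔱 → ℂ) (p : Complexification L) : Prop :=
  ∀ H : 𝔱, ⁅ofReal (H : L), p⁆ = α H • p

namespace IsWeightVector

variable {𝔱 : LieSubalgebra ℝ L} {α β : 𝔱 → ℂ} {p q : Complexification L}
  {Q : LinearMap.BilinForm ℝ L}

lemma lie (hp : IsWeightVector 𝔱 α p) (hq : IsWeightVector 𝔱 β q) :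
    IsWeightVector 𝔱 (α + β) ⁅p, q⁆ := fun H => by
  rw [leibniz_lie, hp H, hq H, smul_lie, lie_smul, Pi.add_apply, add_smul]

lemma conj (hp : IsWeightVector 𝔱 α p) :
    IsWeightVector 𝔱 (fun H => starRingEnd ℂ (α H)) (conj p) := fun H => by
  rw [← conj_ofReal, ← conj_lie, hp H, conj_smul]

lemma re_weight_eq_zero (hQsymm : ∀ x y, Q x y = Q y x) (hQpos : ∀ x, x ≠ 0 → 0 < Q x x)
    (hQ : Q.lieInvariant L) (hp : IsWeightVector 𝔱 α p) (hp0 : p ≠ 0) (H : 𝔱) :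
    (α H).re = 0 := by
  have hQself : ∀ y, Q ⁅(H : L), y⁆ y = 0 := fun y => by
    have := hQ H y y
    rw [hQsymm y] at this
    linarith
  have hre : ⁅(H : L), p.re⁆ = (α H).re • p.re - (α H).im • p.im := by
    simpa using congrArg re (hp H)
  have him : ⁅(H : L), p.im⁆ = (α H).im • p.re + (α H).re • p.im := by
    simpa using congrArg im (hp H)
  have h₁ := hQself p.re
  have h₂ := hQself p.im
  rw [hre] at h₁
  rw [him] at h₂
  simp only [map_sub, map_add, map_smul, LinearMap.sub_apply, LinearMap.add_apply,
    LinearMap.smul_apply, smul_eq_mul] at h₁ h₂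
  have : (α H).re * normSq Q p = 0 := by
    unfold normSq
    linear_combination h₁ + h₂ - (α H).im * hQsymm p.re p.im
  exact (mul_eq_zero.mp this).resolve_right (normSq_pos hQpos hp0).ne'

lemma re_mem_and_im_mem (hcent : ∀ X : L, (∀ H ∈ 𝔱, ⁅H, X⁆ = 0) → X ∈ 𝔱)
    (hp : IsWeightVector 𝔱 0 p) : p.re ∈ 𝔱 ∧ p.im ∈ 𝔱 :=
  ⟨hcent _ fun H hH => by simpa using congrArg re (hp ⟨H, hH⟩),
    hcent _ fun H hH => by simpa using congrArg im (hp ⟨H, hH⟩)⟩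

lemma eq_zero_of_form_ofReal_eq_zero (hQpos : ∀ x, x ≠ 0 → 0 < Q x x)
    (hcent : ∀ X : L, (∀ H ∈ 𝔱, ⁅H, X⁆ = 0) → X ∈ 𝔱) (hp : IsWeightVector 𝔱 0 p)
    (hQp : ∀ H : 𝔱, form Q p (ofReal H) = 0) : p = 0 := by
  have hQ0 : ∀ x, Q x x = 0 → x = 0 := fun x hx => by
    by_contra h
    exact (hQpos x h).ne' hx
  obtain ⟨hre, him⟩ := hp.re_mem_and_im_mem hcent
  ext
  · simpa using hQ0 _ (by simpa using congrArg Complex.re (hQp ⟨p.re, hre⟩))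
  · simpa using hQ0 _ (by simpa using congrArg Complex.im (hQp ⟨p.im, him⟩))

lemma conj_of_re_weight_eq_zero (hp : IsWeightVector 𝔱 α p) (hα : ∀ H, (α H).re = 0) :
    IsWeightVector 𝔱 (-α) (Complexification.conj p) := by
  convert hp.conj using 2 with H
  apply Complex.ext <;> simp [hα H]

lemma exists_lie_conj_eq (hQsymm : ∀ x y, Q x y = Q y x) (hQpos : ∀ x, x ≠ 0 → 0 < Q x x)
    (hQ : Q.lieInvariant L) (hcent : ∀ X : L, (∀ H ∈ 𝔱, ⁅H, X⁆ = 0) → X ∈ 𝔱)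
    (hp : IsWeightVector 𝔱 α p) (hp0 : p ≠ 0) (hα : α ≠ 0) :
    ∃ H : 𝔱, α H ≠ 0 ∧ ⁅p, Complexification.conj p⁆ = Complex.I • ofReal (H : L) := by
  have himag := hp.re_weight_eq_zero hQsymm hQpos hQ hp0
  set h := ⁅p, Complexification.conj p⁆
  obtain ⟨hre, him⟩ := (by simpa using hp.lie (hp.conj_of_re_weight_eq_zero himag) :
    IsWeightVector 𝔱 0 h).re_mem_and_im_mem hcent
  have hform : ∀ H : 𝔱, form Q h (ofReal H) = α H * normSq Q p := fun H => by
    rw [form_lie_ofReal hQ, hp H, form_smul_right, form_conj_self hQsymm]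
  have hQre : ∀ H : 𝔱, Q h.re H = 0 := fun H => by
    simpa [himag H] using congrArg Complex.re (hform H)
  have hQim : ∀ H : 𝔱, Q h.im H = (α H).im * normSq Q p := fun H => by
    simpa [himag H] using congrArg Complex.im (hform H)
  have hre0 : h.re = 0 := by
    by_contra hne
    exact (hQpos _ hne).ne' (hQre ⟨h.re, hre⟩)
  refine ⟨⟨h.im, him⟩, fun hzero => hα ?_, by ext <;> simp [hre0]⟩
  have him0 : h.im = 0 := by
    by_contra hne
    exact (hQpos _ hne).ne' (by simpa [hzero] using hQim ⟨h.im, him⟩)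
  funext H
  have := hQim H
  rw [him0, map_zero, LinearMap.zero_apply, eq_comm, mul_eq_zero,
    or_iff_left (normSq_pos hQpos hp0).ne'] at this
  exact Complex.ext (himag H) this

/-- A form of the one-dimensionality of root spaces. -/
lemma eq_zero_of_form_conj_eq_zero [FiniteDimensional ℝ L] (hQsymm : ∀ x y, Q x y = Q y x)
    (hQpos : ∀ x, x ≠ 0 → 0 < Q x x) (hQ : Q.lieInvariant L)
    (hcent : ∀ X : L, (∀ H ∈ 𝔱, ⁅H, X⁆ = 0) → X ∈ 𝔱) (hp : IsWeightVector 𝔱 α p) (hp0 : p ≠ 0)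
    (hα : α ≠ 0) (hq : IsWeightVector 𝔱 α q) (hqp : form Q q (Complexification.conj p) = 0) :
    q = 0 := by
  obtain ⟨H, hαH, hH⟩ := hp.exists_lie_conj_eq hQsymm hQpos hQ hcent hp0 hα
  have hf := hp.conj_of_re_weight_eq_zero (hp.re_weight_eq_zero hQsymm hQpos hQ hp0)
  have hfq : ⁅Complexification.conj p, q⁆ = 0 := by
    refine (by simpa using hf.lie hq : IsWeightVector 𝔱 0 _).eq_zero_of_form_ofReal_eq_zero
      hQpos hcent fun H' => ?_
    rw [form_lie_ofReal hQ, hf H', form_smul_right, hqp, mul_zero]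
  have hI : ∀ {β : 𝔱 → ℂ} {w}, IsWeightVector 𝔱 β w →
      ⁅Complex.I • ofReal (H : L), w⁆ = (Complex.I * β H) • w := fun hw => by
    rw [smul_lie, hw H, smul_smul]
  refine eq_zero_of_lie_eq_zero_of_lie_eq_smul (mul_ne_zero Complex.I_ne_zero hαH) hH hp0
    (hI hp) ?_ (hI hq) hfq
  rw [hI hf, Pi.neg_apply, mul_neg, neg_smul]

lemma exists_preimage {U : Submodule ℝ L} {φ : L →ₗ[ℝ] L}
    (hUinv : ∀ H ∈ 𝔱, ∀ x ∈ U, ⁅H, x⁆ ∈ U) (hinj : ∀ x ∈ U, φ x = 0 → x = 0)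
    (hφ : ∀ H ∈ 𝔱, ∀ x ∈ U, φ ⁅H, x⁆ = ⁅H, φ x⁆) (hq : IsWeightVector 𝔱 α q)
    (hqU : q ∈ submodule (U.map φ)) :
    ∃ p ∈ submodule U, map φ p = q ∧ IsWeightVector 𝔱 α p := by
  obtain ⟨x, hx, hxq⟩ := Submodule.mem_map.mp hqU.1
  obtain ⟨y, hy, hyq⟩ := Submodule.mem_map.mp hqU.2
  have hp : mk x y ∈ submodule U := ⟨hx, hy⟩
  have hmap : map φ (mk x y) = q := ext hxq hyq
  refine ⟨mk x y, hp, hmap, fun H => sub_eq_zero.mp (eq_zero_of_map_eq_zero hinj ?_ ?_)⟩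
  · exact Submodule.sub_mem _ (lie_ofReal_mem_submodule (hUinv H H.2) hp)
      (Submodule.smul_mem _ _ hp)
  · rw [map_sub, map_smul, map_lie_ofReal (hφ H H.2) hp, hmap, hq H, sub_self]

end IsWeightVector

lemma exists_isWeightVector_mem [FiniteDimensional ℝ L] {𝔱 : LieSubalgebra ℝ L}
    (htab : ∀ X ∈ 𝔱, ∀ Y ∈ 𝔱, ⁅X, Y⁆ = 0) {U : Submodule ℝ L} (hU : U ≠ ⊥)
    (hUinv : ∀ H ∈ 𝔱, ∀ x ∈ U, ⁅H, x⁆ ∈ U) :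
    ∃ α : 𝔱 → ℂ, ∃ v ∈ submodule U, v ≠ 0 ∧ IsWeightVector 𝔱 α v := by
  obtain ⟨v, hvU, hv0, hv⟩ := Module.End.exists_common_eigenvector_of_commute
    (fun H : 𝔱 => LieAlgebra.ad ℂ (Complexification L) (ofReal (H : L)))
    (fun H H' => LinearMap.ext fun w => by
      simp only [Module.End.mul_apply, LieAlgebra.ad_apply]
      rw [leibniz_lie, ← ofReal_lie, htab _ H.2 _ H'.2, ofReal_zero, zero_lie, zero_add])
    (submodule U) (submodule_ne_bot hU) (fun H _ hw => lie_ofReal_mem_submodule (hUinv H H.2) hw)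
  choose α hα using hv
  exact ⟨α, v, hvU, hv0, hα⟩

end Weights

end Complexification

/-- Key lemma on regular subalgebras: if `𝔨` is a regular subalgebra of a compact Lie
algebra `𝔤` (normalized by a Cartan, i.e. maximal abelian, subalgebra `𝔱` of `𝔤`),
`n = n_𝔤(𝔨)` its normalizer and `𝔭` the `Q`-orthogonal complement of `n`, then no
non-zero `ad_n`-submodule of `𝔨` is `ad_n`-equivariantly isomorphic to a non-zero
`ad_n`-submodule of `𝔭`. -/
theorem stmt6 {L : Type*} [LieRing L] [LieAlgebra ℝ L] [FiniteDimensional ℝ L]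
    (Q : L →ₗ[ℝ] L →ₗ[ℝ] ℝ)
    (hQsymm : ∀ x y : L, Q x y = Q y x)
    (hQpos : ∀ x : L, x ≠ 0 → 0 < Q x x)
    (hQad : ∀ X Y Z : L, Q ⁅X, Y⁆ Z = -(Q Y ⁅X, Z⁆))
    (𝔨 𝔱 : LieSubalgebra ℝ L)
    -- 𝔱 is a Cartan (maximal abelian) subalgebra of 𝔤
    (htab : ∀ X ∈ 𝔱, ∀ Y ∈ 𝔱, ⁅X, Y⁆ = 0)
    (htmax : ∀ 𝔱' : LieSubalgebra ℝ L, (∀ X ∈ 𝔱', ∀ Y ∈ 𝔱', ⁅X, Y⁆ = 0) → 𝔱 ≤ 𝔱' → 𝔱' = 𝔱)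
    -- 𝔨 is regular: 𝔱 normalizes 𝔨
    (hreg : ∀ H ∈ 𝔱, ∀ X ∈ 𝔨, ⁅H, X⁆ ∈ 𝔨)
    (𝔭 : Submodule ℝ L)
    -- 𝔭 is the Q-orthogonal complement of the normalizer n_𝔤(𝔨)
    (h𝔭 : ∀ X : L, X ∈ 𝔭 ↔ ∀ Y ∈ 𝔨.normalizer, Q X Y = 0) :
    ∀ U₁ U₂ : Submodule ℝ L, U₁ ≤ 𝔨.toSubmodule → U₂ ≤ 𝔭 → U₁ ≠ ⊥ → U₂ ≠ ⊥ →
      (∀ X ∈ 𝔨.normalizer, ∀ u ∈ U₁, ⁅X, u⁆ ∈ U₁) →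
      (∀ X ∈ 𝔨.normalizer, ∀ u ∈ U₂, ⁅X, u⁆ ∈ U₂) →
      ¬ ∃ φ : L →ₗ[ℝ] L, Submodule.map φ U₁ = U₂ ∧ (∀ x ∈ U₁, φ x = 0 → x = 0) ∧
        (∀ X ∈ 𝔨.normalizer, ∀ u ∈ U₁, φ ⁅X, u⁆ = ⁅X, φ u⁆) := by
  rintro U₁ U₂ hU₁𝔨 hU₂𝔭 - hU₂ne hU₁inv hU₂inv ⟨φ, hmap, hinj, hφ⟩
  have h𝔱n : ∀ H ∈ 𝔱, H ∈ 𝔨.normalizer := fun H hH => (𝔨.mem_normalizer_iff H).mpr (hreg H hH)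
  have hcent : ∀ X : L, (∀ H ∈ 𝔱, ⁅H, X⁆ = 0) → X ∈ 𝔱 :=
    fun _ => LieSubalgebra.mem_of_forall_lie_eq_zero htab htmax
  obtain ⟨α, v, hvU₂, hv0, hv⟩ :=
    Complexification.exists_isWeightVector_mem htab hU₂ne fun H hH => hU₂inv H (h𝔱n H hH)
  have hv_perp : ∀ {w}, w ∈ Complexification.submodule 𝔨.normalizer.toSubmodule →
      Complexification.form Q v w = 0 :=
    Complexification.form_eq_zero_of_mem_submodule (fun x hx => (h𝔭 x).mp (hU₂𝔭 hx)) hvU₂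
  obtain ⟨u, huU₁, rfl, hu⟩ := hv.exists_preimage (fun H hH => hU₁inv H (h𝔱n H hH)) hinj
    (fun H hH => hφ H (h𝔱n H hH)) (hmap ▸ hvU₂)
  have hu0 : u ≠ 0 := by
    rintro rfl
    exact hv0 (map_zero _)
  apply hv0
  by_cases hα : α = 0
  · subst hα
    exact hv.eq_zero_of_form_ofReal_eq_zero hQpos hcent fun H =>
      hv_perp (Complexification.ofReal_mem_submodule (h𝔱n H H.2))
  · exact hu.eq_zero_of_form_conj_eq_zero hQsymm hQpos hQad hcent hu0 hα hv <| hv_perp <|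
      Complexification.conj_mem_submodule <|
        Complexification.submodule_mono (hU₁𝔨.trans 𝔨.le_normalizer) huU₁
end

section
/- Let 𝔤 be a compact Lie algebra with regular subalgebra 𝔨, normalizer n = n_𝔤(𝔨), and Q-orthogonal complement 𝔭 of n in 𝔤. If φ: 𝔫' → 𝔮 is an ad_n-equivariant isomorphism from a submodule 𝔫' ⊆ 𝔨 onto a submodule 𝔮 ⊆ 𝔭, and X ∈ 𝔫' lies in a Cartan subalgebra 𝔱 of 𝔤 contained in n, then φ(X) = 0; hence 𝔫' = {0}. -/
/-!
For `Y ∈ 𝔫'` lying in a maximal abelian subalgebra `𝔱 ⊆ n_𝔤(𝔨)`, equivariance gives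
`⁅H, φ Y⁆ = φ ⁅H, Y⁆ = 0` for all `H ∈ 𝔱`, so `𝔱 + ℝ φ Y` is abelian and maximality puts `φ Y`
in `𝔱 ⊆ n`. But `φ Y ∈ 𝔭 ⊥ n`, so `Q (φ Y) (φ Y) = 0` and `φ Y = 0`. Since every element of `𝔫'`
lies in such a subalgebra and `φ` is injective on `𝔫'`, `𝔫' = 0`.
-/

namespace LieSubalgebra

variable {R L : Type*} [CommRing R] [LieRing L] [LieAlgebra R L]

def ofLieEqZero (S : Submodule R L) (hS : ∀ x ∈ S, ∀ y ∈ S, ⁅x, y⁆ = 0) :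
    LieSubalgebra R L where
  toSubmodule := S
  lie_mem' {x y} hx hy := (hS x hx y hy).symm ▸ S.zero_mem

theorem lie_eq_zero_of_mem_sup_span_singleton (𝔱 : LieSubalgebra R L)
    (hab : ∀ A ∈ 𝔱, ∀ B ∈ 𝔱, ⁅A, B⁆ = 0) {z : L} (hz : ∀ H ∈ 𝔱, ⁅H, z⁆ = 0) :
    ∀ x ∈ 𝔱.toSubmodule ⊔ R ∙ z, ∀ y ∈ 𝔱.toSubmodule ⊔ R ∙ z, ⁅x, y⁆ = 0 := by
  have hdecomp : ∀ x ∈ 𝔱.toSubmodule ⊔ R ∙ z, ∃ a ∈ 𝔱, ∃ c : R, a + c • z = x := by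
    intro x hx
    obtain ⟨a, ha, w, hw, rfl⟩ := Submodule.mem_sup.mp hx
    obtain ⟨c, rfl⟩ := Submodule.mem_span_singleton.mp hw
    exact ⟨a, ha, c, rfl⟩
  rintro _ hx _ hy
  obtain ⟨a, ha, c, rfl⟩ := hdecomp _ hx
  obtain ⟨b, hb, d, rfl⟩ := hdecomp _ hy
  have hzb : ⁅z, b⁆ = 0 := by rw [← lie_skew, hz b hb, neg_zero]
  simp [hab a ha b hb, hz a ha, hzb]

theorem mem_of_forall_lie_eq_zero_of_maximal_abelian (𝔱 : LieSubalgebra R L)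
    (hab : ∀ A ∈ 𝔱, ∀ B ∈ 𝔱, ⁅A, B⁆ = 0)
    (hmax : ∀ 𝔱' : LieSubalgebra R L, (∀ A ∈ 𝔱', ∀ B ∈ 𝔱', ⁅A, B⁆ = 0) → 𝔱 ≤ 𝔱' → 𝔱' = 𝔱)
    {z : L} (hz : ∀ H ∈ 𝔱, ⁅H, z⁆ = 0) : z ∈ 𝔱 := by
  have habz := lie_eq_zero_of_mem_sup_span_singleton 𝔱 hab hz
  have h𝔰 : ofLieEqZero _ habz = 𝔱 := hmax _ habz fun x hx ↦ Submodule.mem_sup_left hx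
  rw [← h𝔰]
  exact Submodule.mem_sup_right (Submodule.mem_span_singleton_self z)

theorem le_normalizer_of_forall_lie_mem {𝔨 𝔱 : LieSubalgebra R L}
    (h : ∀ H ∈ 𝔱, ∀ X ∈ 𝔨, ⁅H, X⁆ ∈ 𝔨) : 𝔱 ≤ 𝔨.normalizer :=
  fun H hH ↦ (mem_normalizer_iff 𝔨 H).mpr (h H hH)

end LieSubalgebra

section

variable {L : Type*} [LieRing L] [LieAlgebra ℝ L] (Q : L →ₗ[ℝ] L →ₗ[ℝ] ℝ) (𝔫 : Submodule ℝ L)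

theorem eq_zero_of_forall_apply_eq_zero_of_mem (hQpos : ∀ x : L, x ≠ 0 → 0 < Q x x)
    {z : L} (horth : ∀ Y ∈ 𝔫, Q z Y = 0) (hz : z ∈ 𝔫) : z = 0 := by
  by_contra hne
  exact (hQpos z hne).ne' (horth z hz)

theorem apply_eq_zero_of_mem_maximal_abelian (hQpos : ∀ x : L, x ≠ 0 → 0 < Q x x)
    (𝔭 : Submodule ℝ L) (h𝔭 : ∀ X ∈ 𝔭, ∀ Y ∈ 𝔫, Q X Y = 0)
    (𝔫' : Submodule ℝ L) (φ : L →ₗ[ℝ] L) (hφ𝔭 : ∀ u ∈ 𝔫', φ u ∈ 𝔭)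
    (hφequiv : ∀ X ∈ 𝔫, ∀ u ∈ 𝔫', φ ⁅X, u⁆ = ⁅X, φ u⁆)
    (𝔱 : LieSubalgebra ℝ L) (hab : ∀ A ∈ 𝔱, ∀ B ∈ 𝔱, ⁅A, B⁆ = 0)
    (hmax : ∀ 𝔱' : LieSubalgebra ℝ L, (∀ A ∈ 𝔱', ∀ B ∈ 𝔱', ⁅A, B⁆ = 0) → 𝔱 ≤ 𝔱' → 𝔱' = 𝔱)
    (h𝔱 : 𝔱.toSubmodule ≤ 𝔫) {Y : L} (hY𝔫' : Y ∈ 𝔫') (hY𝔱 : Y ∈ 𝔱) : φ Y = 0 := by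
  have hcomm : ∀ H ∈ 𝔱, ⁅H, φ Y⁆ = 0 := fun H hH ↦ by
    rw [← hφequiv H (h𝔱 hH) Y hY𝔫', hab H hH Y hY𝔱, map_zero]
  have hφY𝔱 : φ Y ∈ 𝔱 := 𝔱.mem_of_forall_lie_eq_zero_of_maximal_abelian hab hmax hcomm
  exact eq_zero_of_forall_apply_eq_zero_of_mem Q 𝔫 hQpos (h𝔭 _ (hφ𝔭 Y hY𝔫')) (h𝔱 hφY𝔱)

end

theorem stmt7_general {L : Type*} [LieRing L] [LieAlgebra ℝ L]
    (Q : L →ₗ[ℝ] L →ₗ[ℝ] ℝ)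
    (hQpos : ∀ x : L, x ≠ 0 → 0 < Q x x)
    (𝔨 𝔱 : LieSubalgebra ℝ L)
    -- 𝔱 is a Cartan (maximal abelian) subalgebra of 𝔤 normalizing 𝔨
    (htab : ∀ X ∈ 𝔱, ∀ Y ∈ 𝔱, ⁅X, Y⁆ = 0)
    (htmax : ∀ 𝔱' : LieSubalgebra ℝ L, (∀ X ∈ 𝔱', ∀ Y ∈ 𝔱', ⁅X, Y⁆ = 0) → 𝔱 ≤ 𝔱' → 𝔱' = 𝔱)
    (hreg : ∀ H ∈ 𝔱, ∀ X ∈ 𝔨, ⁅H, X⁆ ∈ 𝔨)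
    (𝔭 : Submodule ℝ L)
    (h𝔭 : ∀ X : L, X ∈ 𝔭 ↔ ∀ Y ∈ 𝔨.normalizer, Q X Y = 0)
    (𝔫' 𝔮 : Submodule ℝ L)
    (h𝔮p : 𝔮 ≤ 𝔭)
    (φ : L →ₗ[ℝ] L)
    (hφmap : Submodule.map φ 𝔫' = 𝔮)
    (hφinj : ∀ x ∈ 𝔫', φ x = 0 → x = 0)
    (hφequiv : ∀ X ∈ 𝔨.normalizer, ∀ u ∈ 𝔫', φ ⁅X, u⁆ = ⁅X, φ u⁆)
    -- every element of 𝔫' lies in some Cartan subalgebra of 𝔤 contained in n_𝔤(𝔨)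
    (hcover : ∀ Y ∈ 𝔫', ∃ 𝔱' : LieSubalgebra ℝ L,
      (∀ A ∈ 𝔱', ∀ B ∈ 𝔱', ⁅A, B⁆ = 0) ∧
      (∀ 𝔱'' : LieSubalgebra ℝ L, (∀ A ∈ 𝔱'', ∀ B ∈ 𝔱'', ⁅A, B⁆ = 0) → 𝔱' ≤ 𝔱'' → 𝔱'' = 𝔱') ∧
      𝔱' ≤ 𝔨.normalizer ∧ Y ∈ 𝔱')
    (X : L) (hX𝔫' : X ∈ 𝔫') (hX𝔱 : X ∈ 𝔱) :
    φ X = 0 ∧ 𝔫' = ⊥ := by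
  have hφ𝔭 : ∀ u ∈ 𝔫', φ u ∈ 𝔭 := fun u hu ↦ h𝔮p (hφmap ▸ Submodule.mem_map_of_mem hu)
  have horth : ∀ X ∈ 𝔭, ∀ Y ∈ 𝔨.normalizer.toSubmodule, Q X Y = 0 := fun X hX ↦ (h𝔭 X).mp hX
  have hvanish := apply_eq_zero_of_mem_maximal_abelian Q _ hQpos 𝔭 horth 𝔫' φ hφ𝔭 hφequiv
  refine ⟨hvanish 𝔱 htab htmax (LieSubalgebra.le_normalizer_of_forall_lie_mem hreg) hX𝔫' hX𝔱, ?_⟩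
  refine (Submodule.eq_bot_iff 𝔫').mpr fun Y hY ↦ hφinj Y hY ?_
  obtain ⟨𝔱', hab, hmax, hle, hY𝔱'⟩ := hcover Y hY
  exact hvanish 𝔱' hab hmax hle hY hY𝔱'

/-- If `φ : 𝔫' → 𝔮` is an `ad_n`-equivariant isomorphism from an `ad_n`-submodule
`𝔫' ⊆ 𝔨` onto an `ad_n`-submodule `𝔮 ⊆ 𝔭`, where `𝔨` is a regular subalgebra of the
compact Lie algebra `𝔤` (normalized by the Cartan subalgebra `𝔱 ⊆ n = n_𝔤(𝔨)`),
and `X ∈ 𝔫'` lies in `𝔱`, then `φ X = 0`; hence (as every element of `𝔫'` lies in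
some Cartan subalgebra of `𝔤` contained in `n`) `𝔫' = 0`. -/
theorem stmt7 {L : Type*} [LieRing L] [LieAlgebra ℝ L] [FiniteDimensional ℝ L]
    (Q : L →ₗ[ℝ] L →ₗ[ℝ] ℝ)
    (hQsymm : ∀ x y : L, Q x y = Q y x)
    (hQpos : ∀ x : L, x ≠ 0 → 0 < Q x x)
    (hQad : ∀ X Y Z : L, Q ⁅X, Y⁆ Z = -(Q Y ⁅X, Z⁆))
    (𝔨 𝔱 : LieSubalgebra ℝ L)
    -- 𝔱 is a Cartan (maximal abelian) subalgebra of 𝔤 normalizing 𝔨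
    (htab : ∀ X ∈ 𝔱, ∀ Y ∈ 𝔱, ⁅X, Y⁆ = 0)
    (htmax : ∀ 𝔱' : LieSubalgebra ℝ L, (∀ X ∈ 𝔱', ∀ Y ∈ 𝔱', ⁅X, Y⁆ = 0) → 𝔱 ≤ 𝔱' → 𝔱' = 𝔱)
    (hreg : ∀ H ∈ 𝔱, ∀ X ∈ 𝔨, ⁅H, X⁆ ∈ 𝔨)
    (𝔭 : Submodule ℝ L)
    (h𝔭 : ∀ X : L, X ∈ 𝔭 ↔ ∀ Y ∈ 𝔨.normalizer, Q X Y = 0)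
    (𝔫' 𝔮 : Submodule ℝ L)
    (h𝔫'k : 𝔫' ≤ 𝔨.toSubmodule) (h𝔮p : 𝔮 ≤ 𝔭)
    (h𝔫'inv : ∀ X ∈ 𝔨.normalizer, ∀ u ∈ 𝔫', ⁅X, u⁆ ∈ 𝔫')
    (h𝔮inv : ∀ X ∈ 𝔨.normalizer, ∀ u ∈ 𝔮, ⁅X, u⁆ ∈ 𝔮)
    (φ : L →ₗ[ℝ] L)
    (hφmap : Submodule.map φ 𝔫' = 𝔮)
    (hφinj : ∀ x ∈ 𝔫', φ x = 0 → x = 0)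
    (hφequiv : ∀ X ∈ 𝔨.normalizer, ∀ u ∈ 𝔫', φ ⁅X, u⁆ = ⁅X, φ u⁆)
    -- every element of 𝔫' lies in some Cartan subalgebra of 𝔤 contained in n_𝔤(𝔨)
    (hcover : ∀ Y ∈ 𝔫', ∃ 𝔱' : LieSubalgebra ℝ L,
      (∀ A ∈ 𝔱', ∀ B ∈ 𝔱', ⁅A, B⁆ = 0) ∧
      (∀ 𝔱'' : LieSubalgebra ℝ L, (∀ A ∈ 𝔱'', ∀ B ∈ 𝔱'', ⁅A, B⁆ = 0) → 𝔱' ≤ 𝔱'' → 𝔱'' = 𝔱') ∧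
      𝔱' ≤ 𝔨.normalizer ∧ Y ∈ 𝔱')
    (X : L) (hX𝔫' : X ∈ 𝔫') (hX𝔱 : X ∈ 𝔱) :
    φ X = 0 ∧ 𝔫' = ⊥ :=
  stmt7_general Q hQpos 𝔨 𝔱 htab htmax hreg 𝔭 h𝔭 𝔫' 𝔮 h𝔮p φ hφmap hφinj hφequiv hcover X hX𝔫' hX𝔱
end

section
/- Let 𝔤 be a compact Lie algebra with ad-invariant inner product Q, 𝔨 a subalgebra with orthogonal complement 𝔪. Suppose every irreducible non-zero ad_𝔨-submodule of 𝔨 is ad_𝔨-inequivalent to every irreducible non-zero ad_𝔨-submodule of 𝔪. Then every non-zero ad_n-submodule of 𝔨 is ad_n-inequivalent to every non-zero ad_n-submodule of 𝔭, where n = n_𝔤(𝔨) and 𝔭 is the orthogonal complement of n in 𝔤 (i.e. 𝔨 is weakly regular). -/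
/-!
Since `𝔨 ⊆ n`, we have `𝔭 ⊆ 𝔪`, and every `ad_n`-submodule is in particular an
`ad_𝔨`-submodule. Given an `ad_n`-equivalence `φ` between `U₁ ⊆ 𝔨` and `U₂ ⊆ 𝔭`, pick (by finite
dimensionality) an irreducible `ad_𝔨`-submodule `V ⊆ U₁`. Then `φ` restricts to an
`ad_𝔨`-equivalence of `V` with `φ V ⊆ 𝔪`, and `φ V` is again irreducible, against the hypothesis.
-/

theorem Submodule.map_ne_bot_of_injOn {R M N : Type*} [Ring R] [AddCommGroup M] [Module R M]
    [AddCommGroup N] [Module R N] {U : Submodule R M} {φ : M →ₗ[R] N} (hU : U ≠ ⊥)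
    (hφ : ∀ u ∈ U, φ u = 0 → u = 0) : U.map φ ≠ ⊥ := by
  rw [Ne, ← LinearMap.le_ker_iff_map]
  exact fun hker => hU ((Submodule.eq_bot_iff U).2 fun u hu => hφ u hu (hker hu))

section AdInvariant

variable {R L : Type*} [Ring R] [AddCommGroup L] [Module R L] [Bracket L L]

def IsAdInvariant (S : Set L) (U : Submodule R L) : Prop :=
  ∀ X ∈ S, ∀ u ∈ U, ⁅X, u⁆ ∈ U

def IsAdIrreducible (S : Set L) (U : Submodule R L) : Prop :=
  ∀ W ≤ U, IsAdInvariant S W → W = ⊥ ∨ W = U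

def IsAdEquivariantOn (S : Set L) (φ : L →ₗ[R] L) (U : Submodule R L) : Prop :=
  ∀ X ∈ S, ∀ u ∈ U, φ ⁅X, u⁆ = ⁅X, φ u⁆

variable {S T : Set L} {U V W : Submodule R L} {φ : L →ₗ[R] L}

theorem IsAdInvariant.mono (hU : IsAdInvariant T U) (hST : S ⊆ T) : IsAdInvariant S U :=
  fun X hX => hU X (hST hX)

theorem IsAdEquivariantOn.mono (hφ : IsAdEquivariantOn T φ U) (hST : S ⊆ T) (hVU : V ≤ U) :
    IsAdEquivariantOn S φ V :=
  fun X hX u hu => hφ X (hST hX) u (hVU hu)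

theorem IsAdInvariant.map (hU : IsAdInvariant S U) (hφ : IsAdEquivariantOn S φ U) :
    IsAdInvariant S (U.map φ) := by
  rintro X hX _ ⟨u, hu, rfl⟩
  exact ⟨⁅X, u⁆, hU X hX u hu, hφ X hX u hu⟩

theorem IsAdInvariant.inf_comap (hU : IsAdInvariant S U) (hW : IsAdInvariant S W)
    (hφ : IsAdEquivariantOn S φ U) : IsAdInvariant S (U ⊓ W.comap φ) := by
  rintro X hX u ⟨huU, huW⟩
  refine ⟨hU X hX u huU, ?_⟩
  rw [SetLike.mem_coe, Submodule.mem_comap, hφ X hX u huU]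
  exact hW X hX (φ u) huW

/-- A submodule `W ≤ φ U` is controlled by its preimage `U ⊓ φ⁻¹ W`, which is `⊥` or `U`. -/
theorem IsAdIrreducible.map (hU : IsAdIrreducible S U) (hUinv : IsAdInvariant S U)
    (hφ : IsAdEquivariantOn S φ U) : IsAdIrreducible S (U.map φ) := by
  intro W hWU hW
  rcases hU _ inf_le_left (hUinv.inf_comap hW hφ) with hbot | htop
  · left
    rw [Submodule.eq_bot_iff]
    intro w hw
    obtain ⟨u, hu, rfl⟩ := hWU hw
    have hu0 : u ∈ U ⊓ W.comap φ := ⟨hu, hw⟩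
    rw [hbot, Submodule.mem_bot] at hu0
    rw [hu0, map_zero]
  · right
    exact le_antisymm hWU (Submodule.map_le_iff_le_comap.2 (htop.ge.trans inf_le_right))

theorem exists_le_isAdIrreducible [IsArtinian R L] (hU : U ≠ ⊥) (hUinv : IsAdInvariant S U) :
    ∃ V ≤ U, V ≠ ⊥ ∧ IsAdInvariant S V ∧ IsAdIrreducible S V := by
  obtain ⟨V, hVU, ⟨hV, hVinv⟩, hVmin⟩ :=
    exists_minimal_le_of_wellFoundedLT (fun V : Submodule R L => V ≠ ⊥ ∧ IsAdInvariant S V)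
      U ⟨hU, hUinv⟩
  refine ⟨V, hVU, hV, hVinv, fun W hWV hW => ?_⟩
  by_cases hW0 : W = ⊥
  · exact .inl hW0
  · exact .inr (le_antisymm hWV (hVmin ⟨hW0, hW⟩ hWV))

end AdInvariant

theorem stmt8_general {L : Type*} [LieRing L] [LieAlgebra ℝ L] [FiniteDimensional ℝ L]
    (Q : L →ₗ[ℝ] L →ₗ[ℝ] ℝ)
    (𝔨 : LieSubalgebra ℝ L)
    (𝔪 𝔭 : Submodule ℝ L)
    (h𝔪 : ∀ X : L, X ∈ 𝔪 ↔ ∀ Y ∈ 𝔨, Q X Y = 0)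
    (h𝔭 : ∀ X : L, X ∈ 𝔭 ↔ ∀ Y ∈ 𝔨.normalizer, Q X Y = 0)
    -- irreducible non-zero ad_𝔨-submodules of 𝔨 and of 𝔪 are pairwise inequivalent
    (hirr : ∀ U₁ U₂ : Submodule ℝ L, U₁ ≤ 𝔨.toSubmodule → U₂ ≤ 𝔪 → U₁ ≠ ⊥ → U₂ ≠ ⊥ →
      (∀ X ∈ 𝔨, ∀ u ∈ U₁, ⁅X, u⁆ ∈ U₁) → (∀ X ∈ 𝔨, ∀ u ∈ U₂, ⁅X, u⁆ ∈ U₂) →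
      (∀ U : Submodule ℝ L, U ≤ U₁ → (∀ X ∈ 𝔨, ∀ u ∈ U, ⁅X, u⁆ ∈ U) → U = ⊥ ∨ U = U₁) →
      (∀ U : Submodule ℝ L, U ≤ U₂ → (∀ X ∈ 𝔨, ∀ u ∈ U, ⁅X, u⁆ ∈ U) → U = ⊥ ∨ U = U₂) →
      ¬ ∃ φ : L →ₗ[ℝ] L, Submodule.map φ U₁ = U₂ ∧ (∀ x ∈ U₁, φ x = 0 → x = 0) ∧
        (∀ X ∈ 𝔨, ∀ u ∈ U₁, φ ⁅X, u⁆ = ⁅X, φ u⁆)) :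
    -- conclusion: 𝔨 is weakly regular
    ∀ U₁ U₂ : Submodule ℝ L, U₁ ≤ 𝔨.toSubmodule → U₂ ≤ 𝔭 → U₁ ≠ ⊥ → U₂ ≠ ⊥ →
      (∀ X ∈ 𝔨.normalizer, ∀ u ∈ U₁, ⁅X, u⁆ ∈ U₁) →
      (∀ X ∈ 𝔨.normalizer, ∀ u ∈ U₂, ⁅X, u⁆ ∈ U₂) →
      ¬ ∃ φ : L →ₗ[ℝ] L, Submodule.map φ U₁ = U₂ ∧ (∀ x ∈ U₁, φ x = 0 → x = 0) ∧
        (∀ X ∈ 𝔨.normalizer, ∀ u ∈ U₁, φ ⁅X, u⁆ = ⁅X, φ u⁆) := by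
  rintro U₁ U₂ hU₁𝔨 hU₂𝔭 hU₁ - hU₁inv - ⟨φ, rfl, hφinj, hφequiv⟩
  have h𝔨n : (𝔨 : Set L) ⊆ 𝔨.normalizer := 𝔨.le_normalizer
  have h𝔭𝔪 : 𝔭 ≤ 𝔪 := fun X hX => (h𝔪 X).2 fun Y hY => (h𝔭 X).1 hX Y (h𝔨n hY)
  obtain ⟨V, hVU₁, hV, hVinv, hVirr⟩ := exists_le_isAdIrreducible hU₁
    ((show IsAdInvariant (𝔨.normalizer : Set L) U₁ from hU₁inv).mono h𝔨n)
  have hφV : IsAdEquivariantOn (𝔨 : Set L) φ V :=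
    (show IsAdEquivariantOn (𝔨.normalizer : Set L) φ U₁ from hφequiv).mono h𝔨n hVU₁
  exact hirr V (V.map φ) (hVU₁.trans hU₁𝔨) ((Submodule.map_mono hVU₁).trans (hU₂𝔭.trans h𝔭𝔪))
    hV (Submodule.map_ne_bot_of_injOn hV fun u hu => hφinj u (hVU₁ hu)) hVinv
    (hVinv.map hφV) hVirr (hVirr.map hVinv hφV) ⟨φ, rfl, fun u hu => hφinj u (hVU₁ hu), hφV⟩

/-- Criterion for weak regularity: if every irreducible non-zero `ad_𝔨`-submodule of
`𝔨` is `ad_𝔨`-inequivalent to every irreducible non-zero `ad_𝔨`-submodule of the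
`Q`-orthogonal complement `𝔪`, then `𝔨` is weakly regular: every non-zero
`ad_n`-submodule of `𝔨` is `ad_n`-inequivalent to every non-zero `ad_n`-submodule of
`𝔭`, where `n = n_𝔤(𝔨)` and `𝔭` is the `Q`-orthogonal complement of `n`. -/
theorem stmt8 {L : Type*} [LieRing L] [LieAlgebra ℝ L] [FiniteDimensional ℝ L]
    (Q : L →ₗ[ℝ] L →ₗ[ℝ] ℝ)
    (hQsymm : ∀ x y : L, Q x y = Q y x)
    (hQpos : ∀ x : L, x ≠ 0 → 0 < Q x x)
    (hQad : ∀ X Y Z : L, Q ⁅X, Y⁆ Z = -(Q Y ⁅X, Z⁆))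
    (𝔨 : LieSubalgebra ℝ L)
    (𝔪 𝔭 : Submodule ℝ L)
    (h𝔪 : ∀ X : L, X ∈ 𝔪 ↔ ∀ Y ∈ 𝔨, Q X Y = 0)
    (h𝔭 : ∀ X : L, X ∈ 𝔭 ↔ ∀ Y ∈ 𝔨.normalizer, Q X Y = 0)
    -- irreducible non-zero ad_𝔨-submodules of 𝔨 and of 𝔪 are pairwise inequivalent
    (hirr : ∀ U₁ U₂ : Submodule ℝ L, U₁ ≤ 𝔨.toSubmodule → U₂ ≤ 𝔪 → U₁ ≠ ⊥ → U₂ ≠ ⊥ →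
      (∀ X ∈ 𝔨, ∀ u ∈ U₁, ⁅X, u⁆ ∈ U₁) → (∀ X ∈ 𝔨, ∀ u ∈ U₂, ⁅X, u⁆ ∈ U₂) →
      (∀ U : Submodule ℝ L, U ≤ U₁ → (∀ X ∈ 𝔨, ∀ u ∈ U, ⁅X, u⁆ ∈ U) → U = ⊥ ∨ U = U₁) →
      (∀ U : Submodule ℝ L, U ≤ U₂ → (∀ X ∈ 𝔨, ∀ u ∈ U, ⁅X, u⁆ ∈ U) → U = ⊥ ∨ U = U₂) →
      ¬ ∃ φ : L →ₗ[ℝ] L, Submodule.map φ U₁ = U₂ ∧ (∀ x ∈ U₁, φ x = 0 → x = 0) ∧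
        (∀ X ∈ 𝔨, ∀ u ∈ U₁, φ ⁅X, u⁆ = ⁅X, φ u⁆)) :
    -- conclusion: 𝔨 is weakly regular
    ∀ U₁ U₂ : Submodule ℝ L, U₁ ≤ 𝔨.toSubmodule → U₂ ≤ 𝔭 → U₁ ≠ ⊥ → U₂ ≠ ⊥ →
      (∀ X ∈ 𝔨.normalizer, ∀ u ∈ U₁, ⁅X, u⁆ ∈ U₁) →
      (∀ X ∈ 𝔨.normalizer, ∀ u ∈ U₂, ⁅X, u⁆ ∈ U₂) →
      ¬ ∃ φ : L →ₗ[ℝ] L, Submodule.map φ U₁ = U₂ ∧ (∀ x ∈ U₁, φ x = 0 → x = 0) ∧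
        (∀ X ∈ 𝔨.normalizer, ∀ u ∈ U₁, φ ⁅X, u⁆ = ⁅X, φ u⁆) :=
  stmt8_general Q 𝔨 𝔪 𝔭 h𝔪 h𝔭 hirr
end
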